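/- arXiv:1612.07306 — 6 statements merged into one kernel-verified Lean document; each statement's English description precedes it below -/
import Mathlib

section
/- If χ₁ and χ₂ are Gaussian pushforwards on a finite abelian group G, then their convolution χ₁ * χ₂, defined by (χ₁ * χ₂)(g) = Σ_{g'∈G} χ₁(g − g') χ₂(g'), is also a Gaussian pushforward on G. -/
open scoped RealInnerProductSpace

/-- A function `χ : G → ℝ` on a finite abelian group is a *Gaussian pushforward* if
there is a lattice `L` (a discrete additive subgroup of a finite-dimensional real inner
product space) and a group homomorphism `h : L →+ G` such that for every `g`,
`χ g` is the (absolutely convergent) sum of `ρ x = exp (−π ⟨x, x⟩)` over `h ⁻¹ g`. -/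
def IsGaussianPushforward {G : Type} [AddCommGroup G] (χ : G → ℝ) : Prop :=
  ∃ (V : Type) (iN : NormedAddCommGroup V),
    letI := iN
    ∃ (iI : InnerProductSpace ℝ V),
      letI := iI
      FiniteDimensional ℝ V ∧
      ∃ (L : AddSubgroup V) (h : L →+ G),
        DiscreteTopology L ∧
        ∀ g : G, HasSum (fun x : {x : L // h x = g} =>
          Real.exp (-Real.pi * ⟪((x : L) : V), ((x : L) : V)⟫)) (χ g)

/-- Convolution of real-valued functions on a finite abelian group. -/
def convolve {G : Type} [AddCommGroup G] [Fintype G] (f g : G → ℝ) : G → ℝ :=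
  fun x => ∑ y : G, f (x - y) * g y

/-! The product of two lattices `L₁ ⊆ V₁`, `L₂ ⊆ V₂` is a lattice in the orthogonal sum
`V₁ ⊕ V₂`, on which the Gaussian weight factors, so the tensor product `χ₁ ⊗ χ₂` of two
Gaussian pushforwards is one on `G × G`. Pushing a Gaussian pushforward forward along any
homomorphism again gives one (compose the homomorphisms and sum fibrewise), and `χ₁ * χ₂` is
the pushforward of `χ₁ ⊗ χ₂` along the addition map `G × G → G`. -/

theorem HasSum.sigma_of_hasSum_of_nonneg {β : Type*} {γ : β → Type*}
    {f : (Σ b, γ b) → ℝ} {g : β → ℝ} {a : ℝ} (hf₀ : ∀ x, 0 ≤ f x)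
    (hf : ∀ b, HasSum (fun c => f ⟨b, c⟩) (g b)) (hg : HasSum g a) : HasSum f a := by
  refine hg.sigma_of_hasSum hf ((summable_sigma_of_nonneg hf₀).2 ⟨fun b => (hf b).summable, ?_⟩)
  simpa only [(hf _).tsum_eq] using hg.summable

theorem HasSum.mul_of_nonneg {ι κ : Type*} {f : ι → ℝ} {g : κ → ℝ} {s t : ℝ}
    (hf : HasSum f s) (hg : HasSum g t) (hf₀ : 0 ≤ f) (hg₀ : 0 ≤ g) :
    HasSum (fun x : ι × κ => f x.1 * g x.2) (s * t) :=
  hf.mul hg (hf.summable.mul_of_nonneg hg.summable hf₀ hg₀)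

theorem exp_neg_pi_inner_self_toLp_prod {V₁ V₂ : Type*} [NormedAddCommGroup V₁]
    [InnerProductSpace ℝ V₁] [NormedAddCommGroup V₂] [InnerProductSpace ℝ V₂] (x₁ : V₁) (x₂ : V₂) :
    Real.exp (-Real.pi * ⟪WithLp.toLp 2 (x₁, x₂), WithLp.toLp 2 (x₁, x₂)⟫) =
      Real.exp (-Real.pi * ⟪x₁, x₁⟫) * Real.exp (-Real.pi * ⟪x₂, x₂⟫) := by
  rw [WithLp.prod_inner_apply, ← Real.exp_add]
  ring_nf

open scoped ENNReal

namespace AddSubgroup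

variable {V₁ V₂ : Type*} [AddCommGroup V₁] [AddCommGroup V₂]

def prodLp (p : ℝ≥0∞) (L₁ : AddSubgroup V₁) (L₂ : AddSubgroup V₂) :
    AddSubgroup (WithLp p (V₁ × V₂)) :=
  (L₁.prod L₂).comap (WithLp.addEquiv p (V₁ × V₂)).toAddMonoidHom

variable (p : ℝ≥0∞) (L₁ : AddSubgroup V₁) (L₂ : AddSubgroup V₂)

def prodLpEquiv : L₁.prodLp p L₂ ≃+ L₁ × L₂ where
  toFun x := (⟨(WithLp.ofLp x.1).1, x.2.1⟩, ⟨(WithLp.ofLp x.1).2, x.2.2⟩)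
  invFun x := ⟨WithLp.toLp p (x.1, x.2), x.1.2, x.2.2⟩
  left_inv _ := rfl
  right_inv _ := rfl
  map_add' _ _ := rfl

variable [TopologicalSpace V₁] [TopologicalSpace V₂]

theorem continuous_prodLpEquiv : Continuous (prodLpEquiv p L₁ L₂) := by
  have hofLp : Continuous fun x : L₁.prodLp p L₂ => WithLp.ofLp (x : WithLp p (V₁ × V₂)) :=
    (WithLp.prod_continuous_ofLp p V₁ V₂).comp continuous_subtype_val
  exact (hofLp.fst.subtype_mk _).prodMk (hofLp.snd.subtype_mk _)

instance [DiscreteTopology L₁] [DiscreteTopology L₂] : DiscreteTopology (L₁.prodLp p L₂) :=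
  .of_continuous_injective (continuous_prodLpEquiv p L₁ L₂) (prodLpEquiv p L₁ L₂).injective

end AddSubgroup

theorem IsGaussianPushforward.prod {G₁ G₂ : Type} [AddCommGroup G₁] [AddCommGroup G₂]
    {χ₁ : G₁ → ℝ} {χ₂ : G₂ → ℝ} (h₁ : IsGaussianPushforward χ₁)
    (h₂ : IsGaussianPushforward χ₂) :
    IsGaussianPushforward fun g : G₁ × G₂ => χ₁ g.1 * χ₂ g.2 := by
  obtain ⟨V₁, _, _, _, L₁, f₁, _, hf₁⟩ := h₁
  obtain ⟨V₂, _, _, _, L₂, f₂, _, hf₂⟩ := h₂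
  let σ := L₁.prodLpEquiv 2 L₂
  refine ⟨WithLp 2 (V₁ × V₂), inferInstance, inferInstance, inferInstance, L₁.prodLp 2 L₂,
    (f₁.prodMap f₂).comp σ.toAddMonoidHom, inferInstance, fun g => ?_⟩
  let e : {x // f₁.prodMap f₂ (σ x) = g} ≃ {a // f₁ a = g.1} × {b // f₂ b = g.2} :=
    (σ.toEquiv.subtypeEquiv fun _ => Prod.ext_iff).trans Equiv.subtypeProdEquivProd
  refine e.symm.hasSum_iff.mp ?_
  convert (hf₁ g.1).mul_of_nonneg (hf₂ g.2) (fun _ => (Real.exp_pos _).le)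
    (fun _ => (Real.exp_pos _).le) using 1
  funext p
  exact exp_neg_pi_inner_self_toLp_prod _ _

theorem IsGaussianPushforward.map {G H : Type} [AddCommGroup G] [AddCommGroup H]
    {χ : G → ℝ} {ψ : H → ℝ} (hχ : IsGaussianPushforward χ) (φ : G →+ H)
    (hψ : ∀ k, HasSum (fun g : {g // φ g = k} => χ g) (ψ k)) : IsGaussianPushforward ψ := by
  obtain ⟨V, _, _, _, L, f, _, hf⟩ := hχ
  refine ⟨V, _, _, ‹_›, L, φ.comp f, ‹_›, fun k => ?_⟩
  let e : (Σ g : {g // φ g = k}, {x // f x = g}) ≃ {x // φ.comp f x = k} :=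
    Equiv.sigmaSubtypeFiberEquivSubtype f fun _ => Iff.rfl
  exact e.hasSum_iff.mp
    (.sigma_of_hasSum_of_nonneg (fun _ => (Real.exp_pos _).le) (fun g => hf g) (hψ k))

theorem hasSum_convolve {G : Type} [AddCommGroup G] [Fintype G] (f g : G → ℝ) (k : G) :
    HasSum (fun p : {p : G × G // p.1 + p.2 = k} => f p.1.1 * g p.1.2) (convolve f g k) := by
  let e : G ≃ {p : G × G // p.1 + p.2 = k} :=
    { toFun y := ⟨(k - y, y), sub_add_cancel k y⟩
      invFun p := p.1.2
      left_inv _ := rfl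
      right_inv := fun ⟨_, hp⟩ => by ext <;> simp [← hp] }
  exact e.hasSum_iff.mp (hasSum_fintype _)

/-- The convolution of two Gaussian pushforwards is a Gaussian pushforward. -/
theorem IsGaussianPushforward.convolve
    {G : Type} [AddCommGroup G] [Fintype G] {χ₁ χ₂ : G → ℝ}
    (h₁ : IsGaussianPushforward χ₁) (h₂ : IsGaussianPushforward χ₂) :
    IsGaussianPushforward (convolve χ₁ χ₂) :=
  (h₁.prod h₂).map ((AddMonoidHom.id G).coprod (AddMonoidHom.id G)) (hasSum_convolve χ₁ χ₂)
end

section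
/- If χ₁ and χ₂ are Gaussian pushforwards on a finite abelian group G, then their pointwise product g ↦ χ₁(g)·χ₂(g) is also a Gaussian pushforward on G. -/
open scoped RealInnerProductSpace

theorem WithLp.exp_neg_mul_inner_self_prod {V₁ V₂ : Type*}
    [NormedAddCommGroup V₁] [InnerProductSpace ℝ V₁]
    [NormedAddCommGroup V₂] [InnerProductSpace ℝ V₂] (c : ℝ) (x : WithLp 2 (V₁ × V₂)) :
    Real.exp (-c * ⟪x, x⟫) =
      Real.exp (-c * ⟪x.fst, x.fst⟫) * Real.exp (-c * ⟪x.snd, x.snd⟫) := by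
  rw [WithLp.prod_inner_apply, ← Real.exp_add, mul_add]
  rfl

namespace AddSubgroup

variable {G V₁ V₂ : Type*} [AddCommGroup G] [AddCommGroup V₁] [AddCommGroup V₂]
  (L₁ : AddSubgroup V₁) (L₂ : AddSubgroup V₂) (h₁ : L₁ →+ G) (h₂ : L₂ →+ G)

def fiberProd : AddSubgroup (WithLp 2 (V₁ × V₂)) where
  carrier :=
    {p | ∃ (hp₁ : p.fst ∈ L₁) (hp₂ : p.snd ∈ L₂), h₁ ⟨p.fst, hp₁⟩ = h₂ ⟨p.snd, hp₂⟩}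
  zero_mem' := ⟨L₁.zero_mem, L₂.zero_mem, by
    show h₁ 0 = h₂ 0
    rw [map_zero, map_zero]⟩
  add_mem' := by
    rintro a b ⟨ha₁, ha₂, ha⟩ ⟨hb₁, hb₂, hb⟩
    refine ⟨L₁.add_mem ha₁ hb₁, L₂.add_mem ha₂ hb₂, ?_⟩
    show h₁ (⟨a.fst, ha₁⟩ + ⟨b.fst, hb₁⟩) = h₂ (⟨a.snd, ha₂⟩ + ⟨b.snd, hb₂⟩)
    rw [map_add, map_add, ha, hb]
  neg_mem' := by
    rintro a ⟨ha₁, ha₂, ha⟩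
    refine ⟨L₁.neg_mem ha₁, L₂.neg_mem ha₂, ?_⟩
    show h₁ (-⟨a.fst, ha₁⟩) = h₂ (-⟨a.snd, ha₂⟩)
    rw [map_neg, map_neg, ha]

namespace fiberProd

variable {L₁ L₂ h₁ h₂}

def fst (z : fiberProd L₁ L₂ h₁ h₂) : L₁ := ⟨z.1.fst, z.2.fst⟩

def snd (z : fiberProd L₁ L₂ h₁ h₂) : L₂ := ⟨z.1.snd, z.2.snd.fst⟩

theorem map_fst_eq_map_snd (z : fiberProd L₁ L₂ h₁ h₂) : h₁ (fst z) = h₂ (snd z) :=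
  z.2.snd.snd

variable (h₁ h₂) in
def hom : fiberProd L₁ L₂ h₁ h₂ →+ G where
  toFun z := h₁ (fst z)
  map_zero' := h₁.map_zero
  map_add' a b := h₁.map_add (fst a) (fst b)

def fiberEquiv (g : G) :
    {z : fiberProd L₁ L₂ h₁ h₂ // hom h₁ h₂ z = g} ≃
      {x : L₁ // h₁ x = g} × {y : L₂ // h₂ y = g} where
  toFun z := (⟨fst z.1, z.2⟩, ⟨snd z.1, (map_fst_eq_map_snd z.1).symm.trans z.2⟩)
  invFun p := ⟨⟨WithLp.toLp 2 (p.1.1, p.2.1), p.1.1.2, p.2.1.2, p.1.2.trans p.2.2.symm⟩, p.1.2⟩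
  left_inv _ := rfl
  right_inv _ := rfl

instance [TopologicalSpace V₁] [TopologicalSpace V₂] [DiscreteTopology L₁]
    [DiscreteTopology L₂] : DiscreteTopology (fiberProd L₁ L₂ h₁ h₂) :=
  DiscreteTopology.of_continuous_injective (f := fun z => (fst z, snd z))
    (by unfold fst snd; fun_prop)
    fun z w hzw => Subtype.ext <| WithLp.ofLp_injective 2 <|
      Prod.ext (congrArg (fun p => (p.1 : V₁)) hzw) (congrArg (fun p => (p.2 : V₂)) hzw)

end fiberProd

end AddSubgroup

/-- The pointwise product of two Gaussian pushforwards is a Gaussian pushforward. -/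
theorem IsGaussianPushforward.mul
    {G : Type} [AddCommGroup G] {χ₁ χ₂ : G → ℝ}
    (h₁ : IsGaussianPushforward χ₁) (h₂ : IsGaussianPushforward χ₂) :
    IsGaussianPushforward (fun g => χ₁ g * χ₂ g) := by
  obtain ⟨V₁, _, _, _, L₁, f₁, _, hsum₁⟩ := h₁
  obtain ⟨V₂, _, _, _, L₂, f₂, _, hsum₂⟩ := h₂
  refine ⟨WithLp 2 (V₁ × V₂), inferInstance, inferInstance, inferInstance,
    L₁.fiberProd L₂ f₁ f₂, AddSubgroup.fiberProd.hom f₁ f₂, inferInstance, fun g => ?_⟩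
  refine (AddSubgroup.fiberProd.fiberEquiv g).symm.hasSum_iff.mp ?_
  convert (hsum₁ g).mul_of_nonneg (hsum₂ g) (fun _ => (Real.exp_pos _).le)
    (fun _ => (Real.exp_pos _).le) using 2 with p
  exact WithLp.exp_neg_mul_inner_self_prod _ _
end

section
/- If χ is a Gaussian pushforward on a finite abelian group G, then for all g₁, g₂ ∈ G: χ(g₁)·χ(g₂)/χ(0) ≤ (χ(g₁ + g₂) + χ(g₁ − g₂))/2. (Note χ(0) ≥ ρ(0) = 1 > 0, so the quotient is well defined.) -/
open scoped RealInnerProductSpace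

open scoped ENNReal

/-!
Writing `ρ_t v = exp (-t ⟪v, v⟫)`, the parallelogram law gives
`ρ_π x · ρ_π y = ρ_{π/2} (x + y) · ρ_{π/2} (x - y)`. The substitution `(x, y) ↦ (x + y, x - y)`
is a bijection from `h⁻¹ g₁ × h⁻¹ g₂` onto the pairs `(u, v) ∈ h⁻¹ (g₁ + g₂) × h⁻¹ (g₁ - g₂)`
with `v ≡ u - 2 w` modulo `2 · ker h`, where `h w = g₂`. Sorting these pairs by the class `c` of
`u` writes `χ g₁ · χ g₂` as `∑_c θ_{g₁+g₂}(c) θ_{g₁-g₂}(c - 2w)` for the partial sums `θ_g(c)` of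
`ρ_{π/2}` over `h⁻¹ g ∩ c`. For `g₂ = 0` this reads `χ g · χ 0 = ∑_c θ_g(c)²`, so AM-GM on each
term gives `2 χ g₁ χ g₂ ≤ χ 0 (χ (g₁ + g₂) + χ (g₁ - g₂))`.
-/

theorem ENNReal.two_mul_le_add_sq (a b : ℝ≥0∞) : 2 * a * b ≤ a ^ 2 + b ^ 2 := by
  rcases eq_or_ne a ⊤ with rfl | ha
  · simp
  rcases eq_or_ne b ⊤ with rfl | hb
  · simp
  lift a to NNReal using ha
  lift b to NNReal using hb
  exact_mod_cast _root_.two_mul_le_add_sq a b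

theorem ENNReal.tsum_mul_tsum {α β : Type*} (f : α → ℝ≥0∞) (g : β → ℝ≥0∞) :
    (∑' a, f a) * ∑' b, g b = ∑' p : α × β, f p.1 * g p.2 := by
  simp_rw [ENNReal.tsum_prod', ENNReal.tsum_mul_left, ENNReal.tsum_mul_right]

theorem injective_add_sub {L : Type*} [AddCommGroup L] [IsAddTorsionFree L] :
    Function.Injective fun p : L × L ↦ (p.1 + p.2, p.1 - p.2) := by
  rintro ⟨x, y⟩ ⟨x', y'⟩ h
  obtain ⟨hadd, hsub⟩ := Prod.mk.inj h
  have hx : 2 • x = 2 • x' := by simpa [two_nsmul] using congrArg₂ (· + ·) hadd hsub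
  have hy : 2 • y = 2 • y' := by simpa [two_nsmul] using congrArg₂ (· - ·) hadd hsub
  ext <;> apply IsAddTorsionFree.nsmul_right_injective two_ne_zero <;> assumption

theorem Real.exp_neg_mul_inner_self_mul_exp_neg_mul_inner_self
    {V : Type*} [NormedAddCommGroup V] [InnerProductSpace ℝ V] (t : ℝ) (x y : V) :
    Real.exp (-t * ⟪x, x⟫) * Real.exp (-t * ⟪y, y⟫) =
      Real.exp (-(t / 2) * ⟪x + y, x + y⟫) * Real.exp (-(t / 2) * ⟪x - y, x - y⟫) := by
  rw [← Real.exp_add, ← Real.exp_add, real_inner_add_add_self, real_inner_sub_sub_self]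
  ring_nf

namespace AddMonoidHom

variable {L G : Type*} [AddCommGroup L] [AddCommGroup G] (h : L →+ G)

def twoSMulKer : AddSubgroup L := h.ker.map (nsmulAddMonoidHom 2)

noncomputable def fiberTsum (φ : L → ℝ≥0∞) (g : G) : ℝ≥0∞ := ∑' x : {x : L // h x = g}, φ x

noncomputable def cosetFiberTsum (ψ : L → ℝ≥0∞) (g : G) (c : L ⧸ h.twoSMulKer) : ℝ≥0∞ :=
  ∑' u : {u : L // h u = g ∧ (u : L ⧸ h.twoSMulKer) = c}, ψ u

theorem mk_eq_mk_sub_two_nsmul_iff {u v w : L} :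
    (v : L ⧸ h.twoSMulKer) = u - ↑(2 • w) ↔ ∃ y, h y = h w ∧ u - v = 2 • y := by
  rw [← QuotientAddGroup.mk_sub, QuotientAddGroup.eq, twoSMulKer, AddSubgroup.mem_map]
  constructor
  · rintro ⟨k, hk, hkuv⟩
    refine ⟨w + k, by simp_all, ?_⟩
    simp only [nsmulAddMonoidHom_apply] at hkuv
    rw [smul_add, hkuv]
    abel
  · rintro ⟨y, hy, huv⟩
    refine ⟨y - w, by simp [hy], ?_⟩
    simp only [nsmulAddMonoidHom_apply, smul_sub]
    rw [← huv]
    abel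

theorem fiberTsum_mul_fiberTsum [IsAddTorsionFree L] {φ ψ : L → ℝ≥0∞}
    (hφψ : ∀ x y, φ x * φ y = ψ (x + y) * ψ (x - y)) {g₁ g₂ : G} {w : L} (hw : h w = g₂) :
    h.fiberTsum φ g₁ * h.fiberTsum φ g₂ =
      ∑' c, h.cosetFiberTsum ψ (g₁ + g₂) c * h.cosetFiberTsum ψ (g₁ - g₂) (c - ↑(2 • w)) := by
  let T := {q : L × L // h q.1 = g₁ + g₂ ∧ h q.2 = g₁ - g₂ ∧
    (q.2 : L ⧸ h.twoSMulKer) = q.1 - ↑(2 • w)}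
  let Φ : {x : L // h x = g₁} × {y : L // h y = g₂} → T := fun p ↦
    ⟨(p.1 + p.2, p.1 - p.2), by simp [p.1.2, p.2.2], by simp [p.1.2, p.2.2],
      h.mk_eq_mk_sub_two_nsmul_iff.2
        ⟨p.2, p.2.2.trans hw.symm, by dsimp only; rw [two_nsmul]; abel⟩⟩
  have hΦ : Φ.Bijective := by
    refine ⟨fun p p' hpp' ↦ ?_, ?_⟩
    · obtain ⟨hx, hy⟩ := Prod.mk.inj (injective_add_sub (congrArg Subtype.val hpp'))
      exact Prod.ext (Subtype.ext hx) (Subtype.ext hy)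
    · rintro ⟨⟨u, v⟩, hu, hv, huv⟩
      obtain ⟨y, hy, huvy⟩ := h.mk_eq_mk_sub_two_nsmul_iff.1 huv
      refine ⟨(⟨u - y, by simp [hu, hy, hw]⟩, ⟨y, hy.trans hw⟩), ?_⟩
      ext
      · exact sub_add_cancel u y
      · change u - y - y = v
        rw [sub_sub, ← two_nsmul, ← huvy, sub_sub_cancel]
  let e : T ≃ Σ c, {u : L // h u = g₁ + g₂ ∧ (u : L ⧸ h.twoSMulKer) = c} ×
      {v : L // h v = g₁ - g₂ ∧ (v : L ⧸ h.twoSMulKer) = c - ↑(2 • w)} :=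
    { toFun q := ⟨q.1.1, ⟨q.1.1, q.2.1, rfl⟩, ⟨q.1.2, q.2.2.1, q.2.2.2⟩⟩
      invFun s := ⟨(s.2.1, s.2.2), s.2.1.2.1, s.2.2.2.1, by rw [s.2.1.2.2]; exact s.2.2.2.2⟩
      left_inv _ := rfl
      right_inv := by rintro ⟨c, ⟨u, hu, rfl⟩, v⟩; rfl }
  calc h.fiberTsum φ g₁ * h.fiberTsum φ g₂
      = ∑' p : {x : L // h x = g₁} × {y : L // h y = g₂}, φ p.1 * φ p.2 :=
        ENNReal.tsum_mul_tsum _ _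
    _ = ∑' q : T, ψ q.1.1 * ψ q.1.2 := by
        rw [← (Equiv.ofBijective Φ hΦ).tsum_eq]
        exact tsum_congr fun p ↦ hφψ _ _
    _ = ∑' s, (fun q : T ↦ ψ q.1.1 * ψ q.1.2) (e.symm s) := (e.symm.tsum_eq _).symm
    _ = _ := by
        rw [ENNReal.tsum_sigma']
        exact tsum_congr fun c ↦
          (ENNReal.tsum_mul_tsum (ψ ∘ Subtype.val) (ψ ∘ Subtype.val)).symm

theorem fiberTsum_mul_fiberTsum_zero [IsAddTorsionFree L] {φ ψ : L → ℝ≥0∞}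
    (hφψ : ∀ x y, φ x * φ y = ψ (x + y) * ψ (x - y)) (g : G) :
    h.fiberTsum φ g * h.fiberTsum φ 0 = ∑' c, h.cosetFiberTsum ψ g c ^ 2 := by
  simpa [sq] using h.fiberTsum_mul_fiberTsum hφψ (map_zero h)

theorem two_mul_fiberTsum_mul_le [IsAddTorsionFree L] {φ ψ : L → ℝ≥0∞}
    (hφψ : ∀ x y, φ x * φ y = ψ (x + y) * ψ (x - y)) (g₁ g₂ : G) :
    2 * h.fiberTsum φ g₁ * h.fiberTsum φ g₂ ≤
      h.fiberTsum φ 0 * (h.fiberTsum φ (g₁ + g₂) + h.fiberTsum φ (g₁ - g₂)) := by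
  by_cases hg₂ : ∃ w, h w = g₂
  swap
  · have : IsEmpty {y // h y = g₂} := ⟨fun y ↦ hg₂ ⟨y, y.2⟩⟩
    simp [fiberTsum]
  obtain ⟨w, hw⟩ := hg₂
  set θ := h.cosetFiberTsum ψ
  calc 2 * h.fiberTsum φ g₁ * h.fiberTsum φ g₂
      = ∑' c, 2 * θ (g₁ + g₂) c * θ (g₁ - g₂) (c - ↑(2 • w)) := by
        simp only [mul_assoc, h.fiberTsum_mul_fiberTsum hφψ hw, ENNReal.tsum_mul_left, θ]
    _ ≤ ∑' c, (θ (g₁ + g₂) c ^ 2 + θ (g₁ - g₂) (c - ↑(2 • w)) ^ 2) :=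
        ENNReal.tsum_le_tsum fun c ↦ ENNReal.two_mul_le_add_sq _ _
    _ = ∑' c, θ (g₁ + g₂) c ^ 2 + ∑' c, θ (g₁ - g₂) c ^ 2 := by
        rw [ENNReal.tsum_add]
        exact congrArg _ ((Equiv.subRight _).tsum_eq (fun c ↦ θ (g₁ - g₂) c ^ 2))
    _ = _ := by
        rw [← h.fiberTsum_mul_fiberTsum_zero hφψ, ← h.fiberTsum_mul_fiberTsum_zero hφψ]
        ring

end AddMonoidHom

/-- A Gaussian pushforward `χ` on a finite abelian group satisfies
`χ g₁ · χ g₂ / χ 0 ≤ (χ (g₁ + g₂) + χ (g₁ − g₂)) / 2`. -/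
theorem IsGaussianPushforward.ineq
    {G : Type} [AddCommGroup G] {χ : G → ℝ}
    (hχ : IsGaussianPushforward χ) (g₁ g₂ : G) :
    χ g₁ * χ g₂ / χ 0 ≤ (χ (g₁ + g₂) + χ (g₁ - g₂)) / 2 := by
  obtain ⟨V, _, _, -, L, h, -, hχ⟩ := hχ
  have : IsAddTorsionFree V := .of_isTorsionFree ℝ V
  let ρ (t : ℝ) (x : L) : ℝ≥0∞ := ENNReal.ofReal (Real.exp (-t * ⟪(x : V), x⟫))
  have hρ (x y : L) :
      ρ Real.pi x * ρ Real.pi y = ρ (Real.pi / 2) (x + y) * ρ (Real.pi / 2) (x - y) := by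
    simp only [ρ, ← ENNReal.ofReal_mul (Real.exp_nonneg _), AddSubgroup.coe_add,
      AddSubgroup.coe_sub]
    rw [Real.exp_neg_mul_inner_self_mul_exp_neg_mul_inner_self]
  have hχ_nonneg (g : G) : 0 ≤ χ g := (hχ g).nonneg fun _ ↦ Real.exp_nonneg _
  have hχρ (g : G) : h.fiberTsum (ρ Real.pi) g = ENNReal.ofReal (χ g) := by
    rw [← (hχ g).tsum_eq,
      ENNReal.ofReal_tsum_of_nonneg (fun _ ↦ Real.exp_nonneg _) (hχ g).summable]
    rfl
  have key := h.two_mul_fiberTsum_mul_le hρ g₁ g₂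
  simp only [hχρ] at key
  have key' : 2 * χ g₁ * χ g₂ ≤ χ 0 * (χ (g₁ + g₂) + χ (g₁ - g₂)) := by
    have := ENNReal.toReal_mono (by finiteness) key
    simpa [ENNReal.toReal_mul, ENNReal.toReal_add, hχ_nonneg] using this
  exact div_le_of_le_mul₀ (hχ_nonneg 0)
    (by linarith [hχ_nonneg (g₁ + g₂), hχ_nonneg (g₁ - g₂)]) (by linarith)
end

section
/- Let G be a finite abelian group, let χ : G → ℝ lie in the topological closure of the set X of Gaussian pushforwards on G with χ(0) > 0, let υ : G → ℝ be a nonnegative even function (υ(g) ≥ 0 and υ(−g) = υ(g) for all g), and set ω = χ * υ. If ω(0) > 0, then for every g ∈ G: χ(g)/χ(0) ≤ ω(g)/ω(0). -/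
open scoped RealInnerProductSpace
open ENNReal
open scoped Classical

section core
variable {V : Type} [NormedAddCommGroup V] [InnerProductSpace ℝ V]
variable {G : Type} [AddCommGroup G] [Fintype G]

noncomputable def rhoE (L : AddSubgroup V) : ↥L → ℝ≥0∞ :=
  fun x => ENNReal.ofReal (Real.exp (-Real.pi * ⟪((x : ↥L) : V), ((x : ↥L) : V)⟫))

noncomputable def Sfun (L : AddSubgroup V) (h : ↥L →+ G) (a : G) : ℝ≥0∞ :=
  ∑' x : {x : ↥L // h x = a}, rhoE L x

def twoL (L : AddSubgroup V) : AddSubgroup ↥L :=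
  (AddMonoidHom.mk' (fun x : ↥L => x + x) (fun a b => by abel)).range

noncomputable def rep (L : AddSubgroup V) (w : ↥L ⧸ twoL L) : ↥L := Quotient.out w

lemma rep_spec (L : AddSubgroup V) (w : ↥L ⧸ twoL L) :
    QuotientAddGroup.mk' (twoL L) (rep L w) = w := by
  simpa [rep] using Quotient.out_eq w

lemma mk'_double (L : AddSubgroup V) (m : ↥L) :
    QuotientAddGroup.mk' (twoL L) m + QuotientAddGroup.mk' (twoL L) m = 0 := by
  rw [← map_add, QuotientAddGroup.mk'_apply, QuotientAddGroup.eq_zero_iff]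
  exact ⟨m, rfl⟩

lemma double_inj (L : AddSubgroup V) {m m' : ↥L} (hmm : m + m = m' + m') : m = m' := by
  have h2 : (2 : ℝ) • (m : V) = (2 : ℝ) • (m' : V) := by
    rw [two_smul, two_smul]
    exact_mod_cast congrArg (Subtype.val) hmm
  exact Subtype.ext (smul_right_injective V two_ne_zero h2)

end core

section core2
variable {V : Type} [NormedAddCommGroup V] [InnerProductSpace ℝ V]
variable {G : Type} [AddCommGroup G] [Fintype G]

lemma inner_identity (r m n : V) :
    (⟪r + m + n, r + m + n⟫ + ⟪m - n, m - n⟫) * 2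
      = ⟪r + (m + m), r + (m + m)⟫ + ⟪r + (n + n), r + (n + n)⟫ := by
  simp only [inner_add_left, inner_add_right, inner_sub_left, inner_sub_right]
  rw [real_inner_comm m r, real_inner_comm n r, real_inner_comm n m]
  ring

noncomputable def masterEquiv (L : AddSubgroup V) :
    (Σ _w : ↥L ⧸ twoL L, ↥L × ↥L) ≃ ↥L × ↥L := by
  refine Equiv.ofBijective
    (fun q => (rep L q.1 + q.2.1 + q.2.2, q.2.1 - q.2.2)) ⟨?_, ?_⟩
  · rintro ⟨w, m, n⟩ ⟨w', m', n'⟩ heq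
    rw [Prod.ext_iff] at heq
    obtain ⟨h1, h2⟩ := heq
    simp only at h1 h2
    have hsum : rep L w + (m + m) = rep L w' + (m' + m') := by
      have : (rep L w + m + n) + (m - n) = (rep L w' + m' + n') + (m' - n') := by
        rw [h1, h2]
      calc rep L w + (m + m) = (rep L w + m + n) + (m - n) := by abel
        _ = (rep L w' + m' + n') + (m' - n') := this
        _ = rep L w' + (m' + m') := by abel
    have hw : w = w' := by
      have h3 := congrArg (QuotientAddGroup.mk' (twoL L)) hsum
      rwa [map_add, map_add, map_add, map_add, mk'_double, mk'_double, add_zero, add_zero,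
        rep_spec, rep_spec] at h3
    subst hw
    have hm : m = m' := double_inj L (by
      have := hsum
      rwa [_root_.add_right_inj] at this)
    subst hm
    have hn : n = n' := by
      have := h2
      rwa [_root_.sub_right_inj] at this
    subst hn
    rfl
  · rintro ⟨x, z⟩
    set w := QuotientAddGroup.mk' (twoL L) (x + z) with hwdef
    have : QuotientAddGroup.mk' (twoL L) (rep L w) = QuotientAddGroup.mk' (twoL L) (x + z) :=
      rep_spec L w
    rw [QuotientAddGroup.mk'_eq_mk'] at this
    obtain ⟨k, hk, hkk⟩ := this
    obtain ⟨t, ht⟩ := hk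
    refine ⟨⟨w, t, t - z⟩, ?_⟩
    have hx : rep L w + t + (t - z) = x := by
      have h2t : rep L w + (t + t) = x + z := by
        rw [show t + t = k from ht]; exact hkk
      calc rep L w + t + (t - z) = rep L w + (t + t) - z := by abel
        _ = x + z - z := by rw [h2t]
        _ = x := by abel
    simp only [Prod.mk.injEq]
    exact ⟨hx, by abel⟩

end core2

section core3
variable {V : Type} [NormedAddCommGroup V] [InnerProductSpace ℝ V]
variable {G : Type} [AddCommGroup G] [Fintype G]

noncomputable def Dfun (L : AddSubgroup V) (t m : ↥L) : ℝ≥0∞ :=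
  ENNReal.ofReal (Real.exp (-(Real.pi / 2) *
    ⟪(t : V) + ((m : V) + (m : V)), (t : V) + ((m : V) + (m : V))⟫))

noncomputable def Bfun (L : AddSubgroup V) (h : ↥L →+ G) (w : ↥L ⧸ twoL L) (c : G) : ℝ≥0∞ :=
  ∑' m : ↥L, if h m = c then Dfun L (rep L w) m else 0

lemma tsum_ite_eq_subtype {α : Type} (p : α → Prop) (f : α → ℝ≥0∞) :
    ∑' x : {x // p x}, f x.1 = ∑' x : α, if p x then f x else 0 :=
  calc ∑' x : {x : α // p x}, f x.1 = ∑' x : ↑{x : α | p x}, f x.1 := rfl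
    _ = ∑' x : α, Set.indicator {x : α | p x} f x := tsum_subtype _ _
    _ = ∑' x : α, if p x then f x else 0 :=
        tsum_congr fun x => by simp [Set.indicator_apply, Set.mem_setOf_eq]

lemma Sfun_ite (L : AddSubgroup V) (h : ↥L →+ G) (a : G) :
    Sfun L h a = ∑' x : ↥L, if h x = a then rhoE L x else 0 :=
  tsum_ite_eq_subtype (fun x => h x = a) (rhoE L)

lemma Bfun_subtype (L : AddSubgroup V) (h : ↥L →+ G) (w : ↥L ⧸ twoL L) (c : G) :
    ∑' m : {m : ↥L // h m = c}, Dfun L (rep L w) m = Bfun L h w c :=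
  tsum_ite_eq_subtype (fun m => h m = c) (Dfun L (rep L w))

lemma rho_mul (L : AddSubgroup V) (t m n : ↥L) :
    rhoE L (t + m + n) * rhoE L (m - n) = Dfun L t m * Dfun L t n := by
  unfold rhoE Dfun
  rw [← ENNReal.ofReal_mul (Real.exp_nonneg _), ← ENNReal.ofReal_mul (Real.exp_nonneg _),
    ← Real.exp_add, ← Real.exp_add]
  congr 2
  have hco : ((t + m + n : ↥L) : V) = (t : V) + (m : V) + (n : V) := by push_cast; ring
  have hco2 : ((m - n : ↥L) : V) = (m : V) - (n : V) := by push_cast; ring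
  rw [hco, hco2]
  have hid := inner_identity (t : V) (m : V) (n : V)
  linear_combination (-(Real.pi / 2)) * hid

@[simp] lemma masterEquiv_apply (L : AddSubgroup V) (w : ↥L ⧸ twoL L) (m n : ↥L) :
    masterEquiv L ⟨w, (m, n)⟩ = (rep L w + m + n, m - n) := rfl

lemma innerSumEq (L : AddSubgroup V) (h : ↥L →+ G) (w : ↥L ⧸ twoL L) (a b : G) :
    (∑' mn : ↥L × ↥L,
        (if h (rep L w + mn.1 + mn.2) = a then rhoE L (rep L w + mn.1 + mn.2) else 0)
          * (if h (mn.1 - mn.2) = b then rhoE L (mn.1 - mn.2) else 0))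
      = ∑ c : G, if h (rep L w) + (c + c) = a + b
          then Bfun L h w c * Bfun L h w (c - b) else 0 := by
  rw [ENNReal.tsum_prod']
  have hterm : ∀ m n : ↥L,
      (if h (rep L w + m + n) = a then rhoE L (rep L w + m + n) else 0)
        * (if h (m - n) = b then rhoE L (m - n) else 0)
      = (if h (rep L w) + (h m + h m) = a + b then Dfun L (rep L w) m else 0)
        * (if h n = h m - b then Dfun L (rep L w) n else 0) := by
    intro m n
    rw [ite_zero_mul_ite_zero, ite_zero_mul_ite_zero]
    refine if_congr ?_ (rho_mul L (rep L w) m n) rfl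
    rw [map_add, map_add, map_sub]
    constructor
    · rintro ⟨H1, H2⟩
      constructor
      · rw [← H1, ← H2]; abel
      · rw [← H2]; abel
    · rintro ⟨H1, H2⟩
      constructor
      · calc h (rep L w) + h m + h n = h (rep L w) + (h m + h m) - (h m - h n) := by abel
          _ = (a + b) - b := by rw [H1, H2]; abel
          _ = a := by abel
      · rw [H2]; abel
  calc ∑' (m : ↥L), ∑' (n : ↥L),
        (if h (rep L w + m + n) = a then rhoE L (rep L w + m + n) else 0)
          * (if h (m - n) = b then rhoE L (m - n) else 0)
      = ∑' (m : ↥L), (if h (rep L w) + (h m + h m) = a + b then Dfun L (rep L w) m else 0)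
          * Bfun L h w (h m - b) := by
        refine tsum_congr fun m => ?_
        rw [Bfun, ← ENNReal.tsum_mul_left]
        exact tsum_congr fun n => hterm m n
    _ = ∑' (σ : Σ c : G, {m : ↥L // h m = c}),
          (if h (rep L w) + (h σ.2.1 + h σ.2.1) = a + b then Dfun L (rep L w) σ.2.1 else 0)
            * Bfun L h w (h σ.2.1 - b) :=
        (((Equiv.sigmaFiberEquiv (fun m : ↥L => h m)).tsum_eq _).symm)
    _ = ∑' (c : G), ∑' (m : {m : ↥L // h m = c}),
          (if h (rep L w) + (c + c) = a + b then Dfun L (rep L w) m.1 else 0)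
            * Bfun L h w (c - b) := by
        rw [ENNReal.tsum_sigma']
        exact tsum_congr fun c => tsum_congr fun m => by rw [m.2]
    _ = ∑ c : G, (if h (rep L w) + (c + c) = a + b
          then Bfun L h w c else 0) * Bfun L h w (c - b) := by
        rw [tsum_fintype]
        refine Finset.sum_congr rfl fun c _ => ?_
        rw [ENNReal.tsum_mul_right]
        congr 1
        split_ifs with H
        · exact Bfun_subtype L h w c
        · simp
    _ = ∑ c : G, if h (rep L w) + (c + c) = a + b
          then Bfun L h w c * Bfun L h w (c - b) else 0 := by
        refine Finset.sum_congr rfl fun c _ => ?_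
        rw [ite_mul, zero_mul]

lemma prod_eq (L : AddSubgroup V) (h : ↥L →+ G) (a b : G) :
    Sfun L h a * Sfun L h b =
      ∑' w : ↥L ⧸ twoL L, ∑ c : G,
        if h (rep L w) + (c + c) = a + b then Bfun L h w c * Bfun L h w (c - b) else 0 := by
  rw [Sfun_ite, Sfun_ite]
  have step1 : ∀ (A B : ↥L → ℝ≥0∞),
      (∑' x : ↥L, A x) * (∑' z : ↥L, B z) = ∑' p : ↥L × ↥L, A p.1 * B p.2 := by
    intro A B
    rw [ENNReal.tsum_prod']
    simp only [ENNReal.tsum_mul_left]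
    rw [ENNReal.tsum_mul_right]
  rw [step1]
  rw [← ((masterEquiv L).tsum_eq
    (fun p : ↥L × ↥L => (if h p.1 = a then rhoE L p.1 else 0)
      * (if h p.2 = b then rhoE L p.2 else 0)))]
  rw [ENNReal.tsum_sigma']
  exact tsum_congr fun w => innerSumEq L h w a b

end core3

section core4
variable {V : Type} [NormedAddCommGroup V] [InnerProductSpace ℝ V]
variable {G : Type} [AddCommGroup G] [Fintype G]

lemma two_mul_le_ennreal (a b : ℝ≥0∞) : 2 * (a * b) ≤ a * a + b * b := by
  wlog hab : a ≤ b generalizing a b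
  · rw [mul_comm a b, add_comm]
    exact this b a (le_of_not_ge hab)
  obtain ⟨c, rfl⟩ := exists_add_of_le hab
  calc 2 * (a * (a + c)) = a * a + (a * c + a * c + a * a) := by ring
    _ ≤ a * a + (a * c + a * c + a * a) + c * c := le_self_add
    _ = a * a + (a + c) * (a + c) := by ring

lemma key_ennreal (L : AddSubgroup V) (h : ↥L →+ G) (g y : G) :
    2 * (Sfun L h g * Sfun L h y)
      ≤ Sfun L h (g + y) * Sfun L h 0 + Sfun L h (g - y) * Sfun L h 0 := by
  rw [prod_eq L h g y, prod_eq L h (g + y) 0, prod_eq L h (g - y) 0]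
  simp only [add_zero, sub_zero]
  -- reindex the third sum
  have third : ∀ w : ↥L ⧸ twoL L,
      (∑ c : G, if h (rep L w) + (c + c) = g - y
          then Bfun L h w c * Bfun L h w c else 0)
      = ∑ c : G, if h (rep L w) + (c + c) = g + y
          then Bfun L h w (c - y) * Bfun L h w (c - y) else 0 := by
    intro w
    refine (Fintype.sum_equiv (Equiv.subRight y)
      (fun c => if h (rep L w) + (c + c) = g + y
        then Bfun L h w (c - y) * Bfun L h w (c - y) else 0)
      (fun c => if h (rep L w) + (c + c) = g - y
        then Bfun L h w c * Bfun L h w c else 0) ?_).symm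
    intro c
    simp only [Equiv.subRight_apply]
    refine if_congr ?_ rfl rfl
    rw [show h (rep L w) + (c - y + (c - y)) = h (rep L w) + (c + c) - (y + y) by abel,
      show g - y = g + y - (y + y) by abel, sub_left_inj]
  rw [← ENNReal.tsum_mul_left]
  calc ∑' w : ↥L ⧸ twoL L, 2 * ∑ c : G,
        (if h (rep L w) + (c + c) = g + y then Bfun L h w c * Bfun L h w (c - y) else 0)
      ≤ ∑' w : ↥L ⧸ twoL L,
          ((∑ c : G, if h (rep L w) + (c + c) = g + y
              then Bfun L h w c * Bfun L h w c else 0)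
          + ∑ c : G, if h (rep L w) + (c + c) = g + y
              then Bfun L h w (c - y) * Bfun L h w (c - y) else 0) := by
        refine ENNReal.tsum_le_tsum fun w => ?_
        rw [Finset.mul_sum, ← Finset.sum_add_distrib]
        refine Finset.sum_le_sum fun c _ => ?_
        split_ifs with H
        · exact two_mul_le_ennreal _ _
        · simp
    _ = (∑' w : ↥L ⧸ twoL L, ∑ c : G,
          if h (rep L w) + (c + c) = g + y then Bfun L h w c * Bfun L h w c else 0)
        + ∑' w : ↥L ⧸ twoL L, ∑ c : G,
          if h (rep L w) + (c + c) = g - y then Bfun L h w c * Bfun L h w c else 0 := by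
        rw [ENNReal.tsum_add]
        congr 1
        exact tsum_congr fun w => (third w).symm

end core4

section real
variable {G : Type} [AddCommGroup G] [Fintype G]

lemma pushforward_nonneg {χ : G → ℝ} (hpf : IsGaussianPushforward χ) (a : G) : 0 ≤ χ a := by
  obtain ⟨V, iN, iI, -, L, h, -, hsum⟩ := hpf
  exact (hsum a).nonneg fun x => Real.exp_nonneg _

lemma key_real {χ : G → ℝ} (hpf : IsGaussianPushforward χ) (a b : G) :
    2 * (χ a * χ b) ≤ χ 0 * χ (a + b) + χ 0 * χ (a - b) := by
  have hnn := pushforward_nonneg hpf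
  obtain ⟨V, iN, iI, -, L, h, -, hsum⟩ := hpf
  have hS : ∀ c : G, Sfun L h c = ENNReal.ofReal (χ c) := by
    intro c
    rw [Sfun, ← (hsum c).tsum_eq, ENNReal.ofReal_tsum_of_nonneg
      (fun x => Real.exp_nonneg _) (hsum c).summable]
    rfl
  have hkey := key_ennreal L h a b
  rw [hS, hS, hS, hS, hS] at hkey
  rw [← ENNReal.ofReal_mul (hnn a), ← ENNReal.ofReal_mul (hnn (a + b)),
    ← ENNReal.ofReal_mul (hnn (a - b)),
    ← ENNReal.ofReal_add (mul_nonneg (hnn _) (hnn _)) (mul_nonneg (hnn _) (hnn _)),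
    show ((2 : ℝ≥0∞) = ENNReal.ofReal (2 : ℝ)) by simp,
    ← ENNReal.ofReal_mul (by norm_num)] at hkey
  have hfin := (ENNReal.ofReal_le_ofReal_iff
    (add_nonneg (mul_nonneg (hnn _) (hnn _)) (mul_nonneg (hnn _) (hnn _)))).mp hkey
  linarith

lemma pushforward_convolve {χ : G → ℝ} (hpf : IsGaussianPushforward χ)
    {υ : G → ℝ} (hυ_nonneg : ∀ g, 0 ≤ υ g) (hυ_even : ∀ g, υ (-g) = υ g) (g : G) :
    χ g * convolve χ υ 0 ≤ χ 0 * convolve χ υ g := by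
  have h2 : 2 * (χ g * convolve χ υ 0) ≤ 2 * (χ 0 * convolve χ υ g) := by
    unfold convolve
    rw [Finset.mul_sum, Finset.mul_sum, Finset.mul_sum, Finset.mul_sum]
    calc ∑ y : G, 2 * (χ g * (χ (0 - y) * υ y))
        ≤ ∑ y : G, (χ 0 * χ (g - y) + χ 0 * χ (g + y)) * υ y := by
          refine Finset.sum_le_sum fun y _ => ?_
          rw [show 2 * (χ g * (χ (0 - y) * υ y)) = (2 * (χ g * χ (0 - y))) * υ y by ring]
          refine mul_le_mul_of_nonneg_right ?_ (hυ_nonneg y)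
          have := key_real hpf g (0 - y)
          rwa [show g + (0 - y) = g - y by abel, show g - (0 - y) = g + y by abel] at this
      _ = ∑ y : G, χ 0 * (χ (g - y) * υ y) + ∑ y : G, χ 0 * χ (g + y) * υ y := by
          rw [← Finset.sum_add_distrib]
          exact Finset.sum_congr rfl fun y _ => by ring
      _ = ∑ y : G, χ 0 * (χ (g - y) * υ y) + ∑ y : G, χ 0 * (χ (g - y) * υ y) := by
          congr 1
          refine Fintype.sum_equiv (Equiv.neg G) _ _ fun y => ?_
          simp only [Equiv.neg_apply]
          rw [show g - -y = g + y by abel, hυ_even]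
          ring
      _ = 2 * ∑ y : G, χ 0 * (χ (g - y) * υ y) := by ring
      _ = ∑ y : G, 2 * (χ 0 * (χ (g - y) * υ y)) := by rw [Finset.mul_sum]
  linarith

end real

/-- If `χ` lies in the closure of the set of Gaussian pushforwards with `χ 0 > 0`,
`υ` is a nonnegative even function, and `ω = χ * υ` has `ω 0 > 0`, then
`χ g / χ 0 ≤ ω g / ω 0` for all `g`. -/
theorem closure_gaussianPushforward_convolve_even
    {G : Type} [AddCommGroup G] [Fintype G] {χ υ ω : G → ℝ}
    (hχ : χ ∈ closure {f : G → ℝ | IsGaussianPushforward f})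
    (hχ0 : 0 < χ 0)
    (hυ_nonneg : ∀ g, 0 ≤ υ g) (hυ_even : ∀ g, υ (-g) = υ g)
    (hω : ω = convolve χ υ) (hω0 : 0 < ω 0) (g : G) :
    χ g / χ 0 ≤ ω g / ω 0 := by
  have hcont : ∀ x : G, Continuous fun f : G → ℝ => convolve f υ x := by
    intro x
    unfold convolve
    exact continuous_finset_sum _ fun y _ => (continuous_apply (x - y)).mul continuous_const
  have hclosed : IsClosed {f : G → ℝ | f g * convolve f υ 0 ≤ f 0 * convolve f υ g} :=
    isClosed_le ((continuous_apply g).mul (hcont 0)) ((continuous_apply 0).mul (hcont g))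
  have hsub : closure {f : G → ℝ | IsGaussianPushforward f}
      ⊆ {f : G → ℝ | f g * convolve f υ 0 ≤ f 0 * convolve f υ g} :=
    closure_minimal (fun f hf => pushforward_convolve hf hυ_nonneg hυ_even g) hclosed
  have hkey : χ g * ω 0 ≤ χ 0 * ω g := by
    rw [hω]; exact hsub hχ
  rw [div_le_div_iff₀ hχ0 hω0]
  linarith
end

section
/- Let G be a finite abelian group, let g₀ ∈ G, let φ : G → ℝ be the function φ(g) = δ(g − g₀) + δ(g + g₀) (where δ(0) = 1 and δ(x) = 0 for x ≠ 0), and let α > 0 be real. Then there exists a sequence (χ_n) of Gaussian pushforwards on G such that the sequence of functions δ + (α/n)·φ − χ_n is O(1/n⁴), i.e., for each g ∈ G, |δ(g) + (α/n)·φ(g) − χ_n(g)| = O(n⁻⁴) as n → ∞. -/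
open scoped RealInnerProductSpace

open Filter Asymptotics

/-- The delta function on a group: `δ 0 = 1` and `δ x = 0` otherwise. -/
def ddelta {G : Type} [AddCommGroup G] [DecidableEq G] : G → ℝ :=
  fun x => if x = 0 then 1 else 0

/-! Let `t > 0` with `exp (-π t²) = q`. Pushing the Gaussian on the lattice `t ℤ ⊂ ℝ` forward
along `k t ↦ k • g₀` gives `g ↦ ∑_{k • g₀ = g} q ^ (k²)`. The terms `k = 0, ±1` contribute
exactly `δ g + q φ g`, and for `q ≤ 1/2` the tail is `O(q⁴)` because
`q ^ (k²) ≤ (2q)⁴ 2 ^ (-k²)` when `|k| ≥ 2`. Taking `q = α / n` proves the theorem. -/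

lemma summable_pow_natAbs_sq {q : ℝ} (hq0 : 0 ≤ q) (hq1 : q < 1) :
    Summable fun k : ℤ => q ^ (k.natAbs ^ 2) := by
  have hnat : Summable fun n : ℕ => q ^ (n ^ 2) :=
    (summable_geometric_of_lt_one hq0 hq1).of_nonneg_of_le (fun n => by positivity)
      fun n => pow_le_pow_of_le_one hq0 hq1.le (Nat.le_self_pow two_ne_zero n)
  exact .of_nat_of_neg (by simpa using hnat) (by simpa using hnat)

lemma exp_neg_pi_mul_sq_eq_pow {q : ℝ} (hq0 : 0 < q) (hq1 : q < 1) (k : ℤ) :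
    Real.exp (-Real.pi * (k * √(Real.log q⁻¹ / Real.pi)) ^ 2) = q ^ (k.natAbs ^ 2) := by
  have hlog : 0 ≤ Real.log q⁻¹ / Real.pi :=
    div_nonneg (Real.log_nonneg (one_le_inv₀ hq0 |>.mpr hq1.le)) Real.pi_pos.le
  rw [mul_pow, Real.sq_sqrt hlog, ← Real.exp_log (pow_pos hq0 _), Real.log_pow, Real.log_inv,
    Nat.cast_pow, Nat.cast_natAbs, Int.cast_abs, sq_abs]
  field_simp

lemma pow_sq_le_of_two_le {q : ℝ} (hq0 : 0 ≤ q) (hq : 2 * q ≤ 1) {n : ℕ} (hn : 2 ≤ n) :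
    q ^ (n ^ 2) ≤ (2 * q) ^ 4 * (1 / 2) ^ (n ^ 2) :=
  calc q ^ (n ^ 2) = (2 * q) ^ (n ^ 2) * (1 / 2) ^ (n ^ 2) := by rw [← mul_pow]; ring_nf
    _ ≤ (2 * q) ^ 4 * (1 / 2) ^ (n ^ 2) :=
      mul_le_mul_of_nonneg_right (pow_le_pow_of_le_one (by positivity) hq (by nlinarith))
        (by positivity)

section Theta

variable {G : Type} [AddCommGroup G]

noncomputable def thetaTerm (g₀ : G) (q : ℝ) (g : G) : ℤ → ℝ :=
  {k : ℤ | k • g₀ = g}.indicator fun k => q ^ (k.natAbs ^ 2)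

noncomputable def thetaPushforward (g₀ : G) (q : ℝ) (g : G) : ℝ :=
  ∑' k, thetaTerm g₀ q g k

lemma thetaTerm_nonneg (g₀ g : G) {q : ℝ} (hq : 0 ≤ q) (k : ℤ) : 0 ≤ thetaTerm g₀ q g k :=
  Set.indicator_nonneg (fun k _ => by positivity) k

lemma summable_thetaTerm (g₀ g : G) {q : ℝ} (hq0 : 0 ≤ q) (hq1 : q < 1) :
    Summable (thetaTerm g₀ q g) :=
  (summable_pow_natAbs_sq hq0 hq1).indicator _

lemma isGaussianPushforward_thetaPushforward (g₀ : G) {q : ℝ} (hq0 : 0 < q) (hq1 : q < 1) :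
    IsGaussianPushforward (thetaPushforward g₀ q) := by
  set t := √(Real.log q⁻¹ / Real.pi)
  have ht : t ≠ 0 := (Real.sqrt_pos.mpr (div_pos (Real.log_pos ((one_lt_inv₀ hq0).mpr hq1))
    Real.pi_pos)).ne'
  let e : ℤ ≃+ AddSubgroup.zmultiples t :=
    (AddMonoidHom.ofInjective (f := zmultiplesHom ℝ t) (smul_left_injective ℤ ht)).trans
      (AddEquiv.addSubgroupCongr (AddSubgroup.range_zmultiplesHom t))
  let h : AddSubgroup.zmultiples t →+ G := (zmultiplesHom G g₀).comp e.symm.toAddMonoidHom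
  refine ⟨ℝ, inferInstance, inferInstance, inferInstance, AddSubgroup.zmultiples t, h,
    inferInstance, fun g => ?_⟩
  let fibre : {k : ℤ // k • g₀ = g} ≃ {x : AddSubgroup.zmultiples t // h x = g} :=
    e.toEquiv.subtypeEquiv fun k => by simp [h]
  have hρ (k : {k : ℤ // k • g₀ = g}) :
      Real.exp (-Real.pi * ⟪((fibre k).1 : ℝ), (fibre k).1⟫) = q ^ ((k : ℤ).natAbs ^ 2) := by
    rw [real_inner_self_eq_norm_sq, Real.norm_eq_abs, sq_abs,
      show ((fibre k).1 : ℝ) = (k : ℤ) • t from rfl, zsmul_eq_mul]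
    exact exp_neg_pi_mul_sq_eq_pow hq0 hq1 k
  rw [← fibre.hasSum_iff]
  simp only [Function.comp_def, hρ]
  exact hasSum_subtype_iff_indicator.mpr (summable_thetaTerm g₀ g hq0.le hq1).hasSum

variable [DecidableEq G]

lemma sum_thetaTerm_neg_one_zero_one (g₀ g : G) (q : ℝ) :
    ∑ k ∈ {-1, 0, 1}, thetaTerm g₀ q g k = ddelta g + q * (ddelta (g - g₀) + ddelta (g + g₀)) := by
  rw [Finset.sum_insert (by decide), Finset.sum_insert (by decide), Finset.sum_singleton]
  simp only [thetaTerm, Set.indicator_apply, Set.mem_ofPred_eq, ddelta, sub_eq_zero, neg_smul,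
    one_smul, zero_smul, eq_comm (a := -g₀), eq_neg_iff_add_eq_zero, eq_comm (a := (0 : G)),
    eq_comm (a := g₀)]
  split_ifs <;> ring

lemma abs_thetaPushforward_sub_le (g₀ g : G) {q : ℝ} (hq0 : 0 ≤ q) (hq : 2 * q ≤ 1) :
    |thetaPushforward g₀ q g - (ddelta g + q * (ddelta (g - g₀) + ddelta (g + g₀)))| ≤
      (2 * q) ^ 4 * ∑' k : ℤ, (1 / 2 : ℝ) ^ (k.natAbs ^ 2) := by
  set s : Finset ℤ := {-1, 0, 1}
  have hθ := summable_thetaTerm g₀ g hq0 (by linarith)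
  have hbound : Summable fun k : ℤ => (2 * q) ^ 4 * (1 / 2 : ℝ) ^ (k.natAbs ^ 2) :=
    (summable_pow_natAbs_sq (by norm_num) (by norm_num)).mul_left _
  have htail : 0 ≤ ∑' k : ((s : Set ℤ)ᶜ : Set ℤ), thetaTerm g₀ q g k :=
    tsum_nonneg fun k => thetaTerm_nonneg g₀ g hq0 k
  rw [thetaPushforward, ← hθ.sum_add_tsum_compl, sum_thetaTerm_neg_one_zero_one,
    add_sub_cancel_left, abs_of_nonneg htail, ← tsum_mul_left]
  calc ∑' k : ((s : Set ℤ)ᶜ : Set ℤ), thetaTerm g₀ q g k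
      ≤ ∑' k : ((s : Set ℤ)ᶜ : Set ℤ), (2 * q) ^ 4 * (1 / 2 : ℝ) ^ ((k : ℤ).natAbs ^ 2) := by
        refine (hθ.subtype _).tsum_le_tsum (fun k => ?_) (hbound.subtype _)
        have hk : 2 ≤ (k : ℤ).natAbs := by
          have := k.2
          simp only [s, Set.mem_compl_iff, Finset.coe_insert, Finset.coe_singleton,
            Set.mem_insert_iff, Set.mem_singleton_iff] at this
          omega
        exact (Set.indicator_le_self' (fun _ _ => by positivity) _).trans
          (pow_sq_le_of_two_le hq0 hq hk)
    _ ≤ _ := hbound.tsum_subtype_le _ _ fun k => by positivity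

end Theta

/-- For `φ g = δ (g − g₀) + δ (g + g₀)` and `α > 0`, there is a sequence `χ n` of
Gaussian pushforwards with `δ + (α/n)·φ − χ n = O(1/n⁴)`, pointwise in `g`. -/
theorem gaussian_approx
    {G : Type} [AddCommGroup G] [DecidableEq G]
    (g₀ : G) (φ : G → ℝ) (hφ : φ = fun g => ddelta (g - g₀) + ddelta (g + g₀))
    (α : ℝ) (hα : 0 < α) :
    ∃ χ : ℕ → G → ℝ, (∀ n, IsGaussianPushforward (χ n)) ∧
      ∀ g : G,
        (fun n : ℕ => ddelta g + α / n * φ g - χ n g) =O[atTop]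
          fun n : ℕ => 1 / (n : ℝ) ^ 4 := by
  subst hφ
  -- `α / n` is an admissible parameter only once `2 * α ≤ n`; before that any will do.
  let q : ℕ → ℝ := fun n => if 2 * α ≤ n then α / n else 1 / 2
  have hq (n : ℕ) : 0 < q n ∧ 2 * q n ≤ 1 := by
    by_cases h : 2 * α ≤ n
    · have hn : (0 : ℝ) < n := by linarith
      simp only [q, if_pos h]
      exact ⟨by positivity, by rwa [mul_div_assoc', div_le_one hn]⟩
    · simp only [q, if_neg h]
      norm_num
  refine ⟨fun n => thetaPushforward g₀ (q n),
    fun n => isGaussianPushforward_thetaPushforward g₀ (hq n).1 (by linarith [hq n]), fun g => ?_⟩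
  refine IsBigO.of_bound ((2 * α) ^ 4 * ∑' k : ℤ, (1 / 2 : ℝ) ^ (k.natAbs ^ 2)) ?_
  filter_upwards [eventually_ge_atTop ⌈2 * α⌉₊] with n hn
  have hqn : q n = α / n := if_pos (Nat.ceil_le.mp hn)
  calc ‖ddelta g + α / n * (ddelta (g - g₀) + ddelta (g + g₀)) - thetaPushforward g₀ (q n) g‖
      = |thetaPushforward g₀ (q n) g - (ddelta g + q n * (ddelta (g - g₀) + ddelta (g + g₀)))| := by
        rw [Real.norm_eq_abs, abs_sub_comm, hqn]
    _ ≤ (2 * q n) ^ 4 * ∑' k : ℤ, (1 / 2 : ℝ) ^ (k.natAbs ^ 2) :=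
        abs_thetaPushforward_sub_le g₀ g (hq n).1.le (hq n).2
    _ = (2 * α) ^ 4 * (∑' k : ℤ, (1 / 2 : ℝ) ^ (k.natAbs ^ 2)) * ‖1 / (n : ℝ) ^ 4‖ := by
        rw [hqn, Real.norm_of_nonneg (by positivity)]
        ring
end

section
/- For every real t > 0 and every real D > 0, there exists d₁ > D such that, setting d₂ = arcosh(cosh(d₁)²), the inequality (d₁²/sinh(d₁)²)·exp(−d₁²/(2t)) ≤ (d₂/sinh(d₂))·exp(−d₂²/(4t)) fails, i.e. (d₁²/sinh(d₁)²)·exp(−d₁²/(2t)) > (d₂/sinh(d₂))·exp(−d₂²/(4t)). (This shows the symmetric-space heat kernel inequality H_t(a,b)²H_t(b,c)² ≤ H_t(a,c)H_t(a,s_b(c))H_t(a,a)² fails on hyperbolic 3-space.) -/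
/-- The inverse hyperbolic cosine on `[1, ∞)`. -/
noncomputable def arcosh (x : ℝ) : ℝ := Real.log (x + Real.sqrt (x ^ 2 - 1))

set_option maxHeartbeats 1000000 in
/-- For every `t > 0` and `D > 0` there is `d₁ > D` such that, with
`d₂ = arcosh (cosh d₁ ^ 2)`, the inequality
`(d₁² / sinh d₁ ²) · exp (−d₁²/(2t)) ≤ (d₂ / sinh d₂) · exp (−d₂²/(4t))` fails.
This shows the symmetric-space heat kernel inequality fails on hyperbolic 3-space. -/
theorem hyperbolic_heat_kernel_ineq_fails
    (t : ℝ) (ht : 0 < t) (D : ℝ) (hD : 0 < D) :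
    ∃ d₁ : ℝ, D < d₁ ∧
      ∀ d₂ : ℝ, d₂ = arcosh (Real.cosh d₁ ^ 2) →
        (d₁ ^ 2 / Real.sinh d₁ ^ 2) * Real.exp (-(d₁ ^ 2) / (2 * t)) >
          (d₂ / Real.sinh d₂) * Real.exp (-(d₂ ^ 2) / (4 * t)) := by
  refine ⟨max D (4 * t + 3) + 1, lt_of_le_of_lt (le_max_left _ _) (lt_add_one _), ?_⟩
  generalize hgen : max D (4 * t + 3) + 1 = d₁
  have hd1t : 4 * t + 3 < d₁ := hgen ▸ lt_of_le_of_lt (le_max_right _ _) (lt_add_one _)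
  clear hgen
  have hd1pos : 0 < d₁ := by linarith
  have hd13 : 3 < d₁ := by linarith
  intro d₂ hd2
  -- basic bounds on cosh/sinh
  have hc : Real.exp d₁ / 2 ≤ Real.cosh d₁ := by
    rw [Real.cosh_eq]; have := (Real.exp_pos (-d₁)).le; linarith
  have hs : Real.sinh d₁ < Real.exp d₁ / 2 := by
    rw [Real.sinh_eq]; have := Real.exp_pos (-d₁); linarith
  have hs0 : 0 < Real.sinh d₁ := Real.sinh_pos_iff.2 hd1pos
  have hc1 : (1 : ℝ) ≤ Real.cosh d₁ := Real.one_le_cosh d₁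
  have hc2 : (1 : ℝ) ≤ Real.cosh d₁ ^ 2 := one_le_pow₀ hc1
  -- lower bound d₂ ≥ 2 d₁ - 3/2
  have hsqnn : 0 ≤ Real.sqrt ((Real.cosh d₁ ^ 2) ^ 2 - 1) := Real.sqrt_nonneg _
  have hlog1 : Real.log (Real.cosh d₁ ^ 2) ≤ d₂ := by
    rw [hd2, arcosh]
    exact Real.log_le_log (by positivity) (by linarith)
  have hlogc : d₁ - Real.log 2 ≤ Real.log (Real.cosh d₁) := by
    have : Real.log (Real.exp d₁ / 2) ≤ Real.log (Real.cosh d₁) :=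
      Real.log_le_log (by positivity) hc
    rwa [Real.log_div (Real.exp_ne_zero _) two_ne_zero, Real.log_exp] at this
  have hlog2 : Real.log 2 < 3 / 4 := by
    have := Real.log_two_lt_d9; linarith
  have hd2ge : 2 * d₁ - 3 / 2 ≤ d₂ := by
    have h : Real.log (Real.cosh d₁ ^ 2) = 2 * Real.log (Real.cosh d₁) := by
      rw [Real.log_pow]; push_cast; ring
    rw [h] at hlog1; linarith
  have hd2pos : 0 < d₂ := by linarith
  have hsd2 : 0 < Real.sinh d₂ := Real.sinh_pos_iff.2 hd2pos
  have hfrac : d₂ / Real.sinh d₂ ≤ 1 :=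
    (div_le_one hsd2).2 (Real.self_le_sinh_iff.2 (le_of_lt hd2pos))
  have hd2sq : 4 * d₁ ^ 2 - 6 * d₁ ≤ d₂ ^ 2 := by nlinarith
  -- RHS ≤ exp ((-4 d₁² + 6 d₁)/(4t))
  have h4t : (0 : ℝ) < 4 * t := by linarith
  have hRHS : (d₂ / Real.sinh d₂) * Real.exp (-(d₂ ^ 2) / (4 * t)) ≤
      Real.exp ((-4 * d₁ ^ 2 + 6 * d₁) / (4 * t)) := by
    have h1 : Real.exp (-(d₂ ^ 2) / (4 * t)) ≤
        Real.exp ((-4 * d₁ ^ 2 + 6 * d₁) / (4 * t)) := by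
      apply Real.exp_le_exp.2
      apply div_le_div_of_nonneg_right ?_ h4t.le
      linarith
    calc (d₂ / Real.sinh d₂) * Real.exp (-(d₂ ^ 2) / (4 * t))
        ≤ 1 * Real.exp (-(d₂ ^ 2) / (4 * t)) := by
          apply mul_le_mul_of_nonneg_right hfrac (Real.exp_pos _).le
      _ = Real.exp (-(d₂ ^ 2) / (4 * t)) := one_mul _
      _ ≤ _ := h1
  -- exponent comparison
  have hexp : Real.exp ((-4 * d₁ ^ 2 + 6 * d₁) / (4 * t)) ≤
      Real.exp (-2 * d₁) * Real.exp (-(d₁ ^ 2) / (2 * t)) := by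
    rw [← Real.exp_add]
    apply Real.exp_le_exp.2
    have heq : -2 * d₁ + -(d₁ ^ 2) / (2 * t) = (-8 * t * d₁ - 2 * d₁ ^ 2) / (4 * t) := by
      field_simp; ring
    rw [heq]
    apply div_le_div_of_nonneg_right ?_ h4t.le
    nlinarith
  -- LHS > 4 d₁² exp(-2d₁) exp(-d₁²/(2t))
  have hsinh2 : Real.sinh d₁ ^ 2 < Real.exp d₁ ^ 2 / 4 := by nlinarith
  have hdiv : 4 * d₁ ^ 2 * Real.exp (-2 * d₁) < d₁ ^ 2 / Real.sinh d₁ ^ 2 := by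
    have h1 : d₁ ^ 2 / (Real.exp d₁ ^ 2 / 4) < d₁ ^ 2 / Real.sinh d₁ ^ 2 :=
      div_lt_div_of_pos_left (by positivity) (by positivity) hsinh2
    have he : Real.exp (-2 * d₁) = (Real.exp d₁ ^ 2)⁻¹ := by
      rw [show (-2 * d₁ : ℝ) = -(d₁ + d₁) by ring, Real.exp_neg, Real.exp_add]
      rw [sq]
    have h2 : d₁ ^ 2 / (Real.exp d₁ ^ 2 / 4) = 4 * d₁ ^ 2 * Real.exp (-2 * d₁) := by
      rw [he]
      have hne : Real.exp d₁ ^ 2 ≠ 0 := by positivity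
      field_simp
    rwa [h2] at h1
  have h1le : (1 : ℝ) ≤ 4 * d₁ ^ 2 := by nlinarith
  calc (d₂ / Real.sinh d₂) * Real.exp (-(d₂ ^ 2) / (4 * t))
      ≤ Real.exp ((-4 * d₁ ^ 2 + 6 * d₁) / (4 * t)) := hRHS
    _ ≤ Real.exp (-2 * d₁) * Real.exp (-(d₁ ^ 2) / (2 * t)) := hexp
    _ ≤ 4 * d₁ ^ 2 * Real.exp (-2 * d₁) * Real.exp (-(d₁ ^ 2) / (2 * t)) := by
        have hE : (0:ℝ) ≤ Real.exp (-2 * d₁) * Real.exp (-(d₁ ^ 2) / (2 * t)) := by positivity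
        nlinarith [mul_le_mul_of_nonneg_right h1le hE]
    _ < (d₁ ^ 2 / Real.sinh d₁ ^ 2) * Real.exp (-(d₁ ^ 2) / (2 * t)) := by
        apply mul_lt_mul_of_pos_right hdiv (Real.exp_pos _)
end
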